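/- Let Q be a quiver whose underlying unoriented graph is the extended Dynkin diagram K̃, with vertex set {0,1,…,n}, so that the symmetric bilinear form of Q is (v,w) = vᵗC̃w. Then the set of imaginary roots of Q equals the set of nonzero integer multiples of δ, i.e., W·(F ∪ −F) = {rδ : r ∈ ℤ, r ≠ 0}, where δ = (1,d). -/

import Mathlib

open scoped BigOperators
open Matrix

namespace QV

variable {E : Type} {n : ℕ}

abbrev dSrc {I : Type} (s t : E → I) : E ⊕ E → I := Sum.elim s t
abbrev dTgt {I : Type} (s t : E → I) : E ⊕ E → I := Sum.elim t s

def qform {I : Type} [Fintype E] [Fintype I] (s t : E → I) (v w : I → ℤ) : ℤ :=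
  2 * ∑ i, v i * w i - ∑ h : E ⊕ E, v (dSrc s t h) * w (dTgt s t h)

section Roots

variable {I : Type} [Fintype E] [Fintype I] [DecidableEq I]

def reflect (s t : E → I) (i : I) (v : I → ℤ) : I → ℤ :=
  v - qform s t v (Pi.single i 1) • Pi.single i 1

def adjOn (s t : E → I) (supp : Set I) (a b : I) : Prop :=
  a ∈ supp ∧ b ∈ supp ∧ ∃ h : E, (s h = a ∧ t h = b) ∨ (s h = b ∧ t h = a)

def ConnSupp (s t : E → I) (α : I → ℤ) : Prop :=
  ∀ a b : I, α a ≠ 0 → α b ≠ 0 →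
    Relation.ReflTransGen (adjOn s t {i | α i ≠ 0}) a b

def InFund (s t : E → I) (α : I → ℤ) : Prop :=
  α ≠ 0 ∧ (∀ i, 0 ≤ α i) ∧ ConnSupp s t α ∧
    ∀ i, qform s t α (Pi.single i 1) ≤ 0

inductive RClosure (s t : E → I) (S : Set (I → ℤ)) : (I → ℤ) → Prop
  | base (v : I → ℤ) (hv : v ∈ S) : RClosure s t S v
  | step (i : I) (v : I → ℤ) (hv : RClosure s t S v) : RClosure s t S (reflect s t i v)

/-- Imaginary roots: the Weyl orbits of `F ∪ -F`. -/
def ImgRoot (s t : E → I) (α : I → ℤ) : Prop :=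
  RClosure s t {v | InFund s t v ∨ InFund s t (-v)} α

end Roots

def rootSet (C : Matrix (Fin n) (Fin n) ℤ) : Set (Fin n → ℤ) :=
  {α | α ⬝ᵥ (C *ᵥ α) = 2}

def extC (C : Matrix (Fin n) (Fin n) ℤ) (d : Fin n → ℤ) :
    Matrix (Fin (n + 1)) (Fin (n + 1)) ℤ :=
  Matrix.of fun i j =>
    Fin.cases
      (Fin.cases (2 : ℤ) (fun j' => -(∑ k, d k * C k j')) j)
      (fun i' => Fin.cases (-(∑ k, C i' k * d k)) (fun j' => C i' j') j) i

def deltaV (d : Fin n → ℤ) : Fin (n + 1) → ℤ := Fin.cons 1 d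

/-!
The vector `δ` spans the radical of `C̃`: `δᵗC̃ = 0`, and writing `u = u₀δ + (0, y)` gives
`uᵗC̃u = yᵗCy`, which is positive unless `y = 0` because `C` is positive definite. An element
`v` of `F` satisfies `vᵗC̃v = ∑ vᵢ (v, εᵢ) ≤ 0`, so it is a positive multiple of `δ`.
Conversely every positive multiple of `δ` lies in `F`: its support is all of `K̃` because the
highest root has full support (otherwise a simple reflection would produce a larger positive
root), and `K̃` is connected. Reflections fix the multiples of `δ`, whence
`W·(F ∪ -F) = {rδ : r ≠ 0}`.
-/

theorem _root_.Relation.ReflTransGen.exists_rel_not_and {α : Type*} {r : α → α → Prop}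
    {p : α → Prop} {a b : α} (h : Relation.ReflTransGen r a b) (ha : ¬ p a) (hb : p b) :
    ∃ x y, r x y ∧ ¬ p x ∧ p y := by
  induction h with
  | refl => exact absurd hb ha
  | @tail c b _ hcb ih =>
    by_cases hc : p c
    · exact ih hc
    · exact ⟨c, b, hcb, hc, hb⟩

section Quiver

variable {I : Type} {s t : E → I}

theorem connSupp_of_forall_ne_zero {α : I → ℤ} (hα : ∀ i, α i ≠ 0)
    (hconn : ∀ a b, Relation.ReflTransGen (adjOn s t Set.univ) a b) : ConnSupp s t α :=
  fun a b _ _ => Relation.ReflTransGen.mono (fun _ _ ⟨_, _, h⟩ => ⟨hα _, hα _, h⟩) _ _ (hconn a b)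

variable [Fintype E] [Fintype I] [DecidableEq I]

theorem exists_edge_of_qform_single_neg {i j : I} (hij : i ≠ j)
    (hneg : qform s t (Pi.single i 1) (Pi.single j 1) < 0) :
    ∃ h : E, (s h = i ∧ t h = j) ∨ (s h = j ∧ t h = i) := by
  have hdiag : ∑ k, (Pi.single i 1 : I → ℤ) k * (Pi.single j 1 : I → ℤ) k = 0 := by
    simp [Pi.single_apply, hij.symm]
  rw [qform, hdiag, mul_zero, zero_sub, neg_lt_zero] at hneg
  obtain ⟨h, -, hh⟩ := Finset.exists_ne_zero_of_sum_ne_zero hneg.ne'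
  have hs : dSrc s t h = i := by
    by_contra hc
    simp [Pi.single_eq_of_ne hc] at hh
  have ht : dTgt s t h = j := by
    by_contra hc
    simp [Pi.single_eq_of_ne hc] at hh
  cases h with
  | inl e => exact ⟨e, .inl ⟨hs, ht⟩⟩
  | inr e => exact ⟨e, .inr ⟨ht, hs⟩⟩

theorem rClosure_subset {S T : Set (I → ℤ)} (hST : S ⊆ T)
    (hT : ∀ i, ∀ v ∈ T, reflect s t i v ∈ T) {v : I → ℤ} (hv : RClosure s t S v) : v ∈ T := by
  induction hv with
  | base v hv => exact hST hv
  | step i v _ ih => exact hT i v ih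

variable {A : Matrix I I ℤ}

theorem qform_single_right (hA : ∀ v w, qform s t v w = v ⬝ᵥ (A *ᵥ w)) (v : I → ℤ) (i : I) :
    qform s t v (Pi.single i 1) = (v ᵥ* A) i := by
  rw [hA, dotProduct_mulVec, dotProduct_single, mul_one]

theorem reflect_eq_self (hA : ∀ v w, qform s t v w = v ⬝ᵥ (A *ᵥ w)) {v : I → ℤ}
    (hv : v ᵥ* A = 0) (i : I) : reflect s t i v = v := by
  rw [reflect, qform_single_right hA, hv, Pi.zero_apply, zero_smul, sub_zero]

theorem reflTransGen_adjOn_univ (hA : ∀ v w, qform s t v w = v ⬝ᵥ (A *ᵥ w)) {a b : I}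
    (h : Relation.ReflTransGen (fun a b => a ≠ b ∧ A a b < 0) a b) :
    Relation.ReflTransGen (adjOn s t Set.univ) a b := by
  refine Relation.ReflTransGen.mono (fun x y ⟨hxy, hneg⟩ => ⟨trivial, trivial, ?_⟩) _ _ h
  refine exists_edge_of_qform_single_neg hxy ?_
  simpa [hA] using hneg

theorem dotProduct_mulVec_self_nonpos_of_inFund (hA : ∀ v w, qform s t v w = v ⬝ᵥ (A *ᵥ w))
    {v : I → ℤ} (hv : InFund s t v) : v ⬝ᵥ (A *ᵥ v) ≤ 0 := by
  obtain ⟨-, hnonneg, -, hq⟩ := hv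
  rw [dotProduct_mulVec, dotProduct_comm]
  refine Finset.sum_nonpos fun i _ => mul_nonpos_of_nonneg_of_nonpos (hnonneg i) ?_
  rw [← qform_single_right hA]
  exact hq i

end Quiver

section Cartan

variable {ι : Type} [Fintype ι] {C : Matrix ι ι ℤ} {d : ι → ℤ}

theorem dotProduct_mulVec_self_pos_of_map_intCast
    (hpos : ∀ u : ι → ℝ, u ≠ 0 → 0 < u ⬝ᵥ ((C.map (Int.cast : ℤ → ℝ)) *ᵥ u))
    {y : ι → ℤ} (hy : y ≠ 0) : 0 < y ⬝ᵥ (C *ᵥ y) := by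
  have hcast : ((y ⬝ᵥ (C *ᵥ y) : ℤ) : ℝ) =
      (Int.cast ∘ y) ⬝ᵥ ((C.map (Int.cast : ℤ → ℝ)) *ᵥ (Int.cast ∘ y)) := by
    rw [← eq_intCast (Int.castRingHom ℝ), RingHom.map_dotProduct]
    congr 1
    funext i
    exact RingHom.map_mulVec _ _ _ i
  have hy' : (Int.cast ∘ y : ι → ℝ) ≠ 0 := fun h =>
    hy (funext fun i => by simpa using congrFun h i)
  exact_mod_cast hcast ▸ hpos _ hy'

theorem exists_mulVec_pos (hdpos : 0 ≤ d) (hd : d ⬝ᵥ (C *ᵥ d) = 2) : ∃ j, 0 < (C *ᵥ d) j := by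
  by_contra! h
  have : d ⬝ᵥ (C *ᵥ d) ≤ 0 :=
    Finset.sum_nonpos fun j _ => mul_nonpos_of_nonneg_of_nonpos (hdpos j) (h j)
  omega

theorem mulVec_apply_neg_of_apply_eq_zero (hoff : ∀ i j, i ≠ j → C i j ≤ 0) (hdpos : 0 ≤ d)
    {x y : ι} (hxy : C x y = -1) (hx : d x = 0) (hy : 0 < d y) : (C *ᵥ d) x < 0 := by
  classical
  have hrest : ∑ k ∈ Finset.univ.erase y, C x k * d k ≤ 0 := by
    refine Finset.sum_nonpos fun k _ => ?_
    by_cases hk : x = k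
    · simp [← hk, hx]
    · exact mul_nonpos_of_nonpos_of_nonneg (hoff x k hk) (hdpos k)
  have hsplit := Finset.add_sum_erase Finset.univ (fun k => C x k * d k) (Finset.mem_univ y)
  simp only [mulVec, dotProduct]
  rw [← hsplit, hxy]
  linarith

end Cartan

section HighestRoot

variable {C : Matrix (Fin n) (Fin n) ℤ} {d : Fin n → ℤ}

theorem sub_smul_single_mem_rootSet (hsymm : C.IsSymm) {x : Fin n} (hdiag : C x x = 2)
    {α : Fin n → ℤ} (hα : α ∈ rootSet C) :
    α - (C *ᵥ α) x • Pi.single x 1 ∈ rootSet C := by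
  have hleft : α ⬝ᵥ (C *ᵥ Pi.single x 1) = (C *ᵥ α) x := by
    rw [dotProduct_mulVec, ← mulVec_transpose, hsymm.eq, dotProduct_single, mul_one]
  have hright : Pi.single x 1 ⬝ᵥ (C *ᵥ α) = (C *ᵥ α) x := by
    rw [single_dotProduct, one_mul]
  have hsingle : Pi.single x 1 ⬝ᵥ (C *ᵥ Pi.single x 1) = 2 := by
    rw [single_dotProduct, one_mul, mulVec_single]
    simpa using hdiag
  simp only [rootSet, Set.mem_ofPred_eq, mulVec_sub, mulVec_smul, sub_dotProduct,
    dotProduct_sub, smul_dotProduct, dotProduct_smul, hleft, hright, hsingle] at hα ⊢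
  rw [hα, smul_eq_mul, smul_eq_mul, smul_eq_mul]
  ring

theorem highestRoot_pos (hsymm : C.IsSymm) (hdiag : ∀ i, C i i = 2)
    (hoff : ∀ i j, i ≠ j → C i j ≤ 0)
    (hconn : ∀ i j : Fin n, Relation.ReflTransGen (fun a b => a ≠ b ∧ C a b = -1) i j)
    (hd : d ∈ rootSet C) (hdpos : 0 ≤ d) (hdmax : ∀ α ∈ rootSet C, 0 ≤ α → α ≤ d) (i : Fin n) :
    0 < d i := by
  refine (hdpos i).lt_of_ne' fun hdi => ?_
  obtain ⟨a, ha⟩ : ∃ a, d a ≠ 0 := by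
    by_contra! h
    simp [rootSet, funext h] at hd
  obtain ⟨x, y, ⟨-, hxy⟩, hx, hy⟩ :=
    (hconn i a).exists_rel_not_and (p := fun k => d k ≠ 0) (not_not.2 hdi) ha
  rw [not_not] at hx
  have hneg := mulVec_apply_neg_of_apply_eq_zero hoff hdpos hxy hx ((hdpos y).lt_of_ne' hy)
  have hreflected_nonneg : 0 ≤ d - (C *ᵥ d) x • Pi.single x 1 := by
    intro k
    by_cases hk : k = x
    · simp [hk, hx, hneg.le]
    · simpa [hk] using hdpos k
  have hle := hdmax _ (sub_smul_single_mem_rootSet hsymm (hdiag x) hd) hreflected_nonneg x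
  simp [hx] at hle
  linarith

end HighestRoot

section Extended

variable (C : Matrix (Fin n) (Fin n) ℤ) (d : Fin n → ℤ)

@[simp] theorem extC_zero_zero : extC C d 0 0 = 2 := rfl
@[simp] theorem extC_zero_succ (j : Fin n) : extC C d 0 j.succ = -(d ᵥ* C) j := rfl
@[simp] theorem extC_succ_zero (i : Fin n) : extC C d i.succ 0 = -(C *ᵥ d) i := rfl
@[simp] theorem extC_succ_succ (i j : Fin n) : extC C d i.succ j.succ = C i j := rfl
@[simp] theorem deltaV_zero : deltaV d 0 = 1 := rfl
@[simp] theorem deltaV_succ (i : Fin n) : deltaV d i.succ = d i := rfl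

theorem eq_smul_deltaV_add_cons (u : Fin (n + 1) → ℤ) :
    u = u 0 • deltaV d + Fin.cons 0 (Fin.tail u - u 0 • d) := by
  funext i
  refine Fin.cases ?_ (fun i => ?_) i <;> simp [Fin.tail]

theorem cons_zero_dotProduct_extC_mulVec_cons_zero (y z : Fin n → ℤ) :
    (Fin.cons 0 y : Fin (n + 1) → ℤ) ⬝ᵥ (extC C d *ᵥ Fin.cons 0 z) = y ⬝ᵥ (C *ᵥ z) := by
  simp [dotProduct, mulVec, Fin.sum_univ_succ]

variable {C d}

theorem deltaV_vecMul_extC (hd : d ⬝ᵥ (C *ᵥ d) = 2) : deltaV d ᵥ* extC C d = 0 := by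
  funext j
  refine Fin.cases ?_ (fun j => ?_) j
  · simp only [vecMul, dotProduct, Fin.sum_univ_succ] at hd ⊢
    simp [hd]
  · simp [vecMul, dotProduct, Fin.sum_univ_succ]

theorem extC_mulVec_deltaV (hd : d ⬝ᵥ (C *ᵥ d) = 2) : extC C d *ᵥ deltaV d = 0 := by
  rw [dotProduct_mulVec] at hd
  funext i
  refine Fin.cases ?_ (fun i => ?_) i
  · simp only [mulVec, dotProduct, Fin.sum_univ_succ] at hd ⊢
    simp [hd]
  · simp [mulVec, dotProduct, Fin.sum_univ_succ]

theorem dotProduct_extC_mulVec_self (hd : d ⬝ᵥ (C *ᵥ d) = 2) (u : Fin (n + 1) → ℤ) :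
    u ⬝ᵥ (extC C d *ᵥ u) = (Fin.tail u - u 0 • d) ⬝ᵥ (C *ᵥ (Fin.tail u - u 0 • d)) := by
  have hleft : deltaV d ⬝ᵥ (extC C d *ᵥ Fin.cons 0 (Fin.tail u - u 0 • d)) = 0 := by
    rw [dotProduct_mulVec, deltaV_vecMul_extC hd, zero_dotProduct]
  conv_lhs => rw [eq_smul_deltaV_add_cons d u]
  rw [mulVec_add, mulVec_smul, extC_mulVec_deltaV hd, smul_zero,
    zero_add, add_dotProduct, smul_dotProduct, hleft, smul_zero, zero_add,
    cons_zero_dotProduct_extC_mulVec_cons_zero]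

theorem eq_smul_deltaV_of_dotProduct_extC_mulVec_self_nonpos
    (hCpos : ∀ y : Fin n → ℤ, y ≠ 0 → 0 < y ⬝ᵥ (C *ᵥ y)) (hd : d ⬝ᵥ (C *ᵥ d) = 2)
    {u : Fin (n + 1) → ℤ} (hu : u ⬝ᵥ (extC C d *ᵥ u) ≤ 0) : u = u 0 • deltaV d := by
  have hy : Fin.tail u - u 0 • d = 0 := by
    by_contra hy
    have := hCpos _ hy
    rw [dotProduct_extC_mulVec_self hd] at hu
    omega
  conv_lhs => rw [eq_smul_deltaV_add_cons d u, hy]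
  rw [← Matrix.vecCons, Matrix.cons_zero_zero, add_zero]

theorem reflTransGen_extC (hsymm : C.IsSymm)
    (hconn : ∀ i j : Fin n, Relation.ReflTransGen (fun a b => a ≠ b ∧ C a b = -1) i j)
    (hdpos : 0 ≤ d) (hd : d ⬝ᵥ (C *ᵥ d) = 2) (a b : Fin (n + 1)) :
    Relation.ReflTransGen (fun a b => a ≠ b ∧ extC C d a b < 0) a b := by
  obtain ⟨j, hj⟩ := exists_mulVec_pos hdpos hd
  have hvecMul : (d ᵥ* C) j = (C *ᵥ d) j := by rw [← mulVec_transpose, hsymm.eq]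
  have hsucc : ∀ i k : Fin n,
      Relation.ReflTransGen (fun a b => a ≠ b ∧ extC C d a b < 0) i.succ k.succ := fun i k =>
    Relation.ReflTransGen.lift Fin.succ
      (fun x y ⟨hxy, h⟩ => ⟨(Fin.succ_injective n).ne hxy, by simp [h]⟩) _ _ (hconn i k)
  have hto : ∀ a, Relation.ReflTransGen (fun a b => a ≠ b ∧ extC C d a b < 0) a 0 :=
    Fin.cases .refl fun i => (hsucc i j).tail ⟨Fin.succ_ne_zero j, by simpa using hj⟩
  have hfrom : ∀ b, Relation.ReflTransGen (fun a b => a ≠ b ∧ extC C d a b < 0) 0 b :=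
    Fin.cases .refl fun k =>
      (hsucc j k).head ⟨(Fin.succ_ne_zero j).symm, by simpa [hvecMul] using hj⟩
  exact (hto a).trans (hfrom b)

end Extended

theorem inFund_iff_eq_smul_deltaV [Fintype E] {C : Matrix (Fin n) (Fin n) ℤ} {d : Fin n → ℤ}
    {s t : E → Fin (n + 1)} (hform : ∀ v w, qform s t v w = v ⬝ᵥ (extC C d *ᵥ w))
    (hsymm : C.IsSymm) (hCpos : ∀ y : Fin n → ℤ, y ≠ 0 → 0 < y ⬝ᵥ (C *ᵥ y))
    (hconn : ∀ i j : Fin n, Relation.ReflTransGen (fun a b => a ≠ b ∧ C a b = -1) i j)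
    (hd : d ⬝ᵥ (C *ᵥ d) = 2) (hdpos : ∀ i, 0 < d i) {v : Fin (n + 1) → ℤ} :
    InFund s t v ↔ ∃ r : ℤ, 0 < r ∧ v = r • deltaV d := by
  constructor
  · intro hv
    have hv_eq := eq_smul_deltaV_of_dotProduct_extC_mulVec_self_nonpos hCpos hd
      (dotProduct_mulVec_self_nonpos_of_inFund hform hv)
    obtain ⟨hne, hnonneg, -, -⟩ := hv
    refine ⟨v 0, (hnonneg 0).lt_of_ne' fun h0 => hne ?_, hv_eq⟩
    rw [hv_eq, h0, zero_smul]
  · rintro ⟨r, hr, rfl⟩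
    have hcoord : ∀ i, 0 < (r • deltaV d) i :=
      Fin.cases (by simpa using hr) fun i => by simpa using mul_pos hr (hdpos i)
    refine ⟨fun h => (hcoord 0).ne' (congrFun h 0), fun i => (hcoord i).le,
      connSupp_of_forall_ne_zero (fun i => (hcoord i).ne') fun a b =>
        reflTransGen_adjOn_univ hform
          (reflTransGen_extC hsymm hconn (fun i => (hdpos i).le) hd a b), fun i => ?_⟩
    rw [qform_single_right hform, smul_vecMul, deltaV_vecMul_extC hd, smul_zero, Pi.zero_apply]

theorem lemma_imaginary_roots_of_extended_dynkin_quiver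
    (C : Matrix (Fin n) (Fin n) ℤ) (d : Fin n → ℤ)
    (hsymm : C.IsSymm)
    (hdiag : ∀ i, C i i = 2)
    (hoff : ∀ i j, i ≠ j → C i j = 0 ∨ C i j = -1)
    (hpos : ∀ u : Fin n → ℝ, u ≠ 0 → 0 < u ⬝ᵥ ((C.map (Int.cast : ℤ → ℝ)) *ᵥ u))
    (hconn : ∀ i j : Fin n, Relation.ReflTransGen (fun a b => a ≠ b ∧ C a b = -1) i j)
    (hd : d ∈ rootSet C) (hdpos : 0 ≤ d)
    (hdmax : ∀ α ∈ rootSet C, 0 ≤ α → α ≤ d)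
    -- `Q` is a quiver whose underlying unoriented graph is the extended Dynkin
    -- diagram `K̃`, i.e. whose symmetric bilinear form is given by `C̃`
    [Fintype E] (s t : E → Fin (n + 1))
    (hform : ∀ v w : Fin (n + 1) → ℤ, qform s t v w = v ⬝ᵥ (extC C d *ᵥ w)) :
    {β : Fin (n + 1) → ℤ | ImgRoot s t β} =
      {β | ∃ r : ℤ, r ≠ 0 ∧ β = r • deltaV d} := by
  have hoff' : ∀ i j, i ≠ j → C i j ≤ 0 := fun i j hij => by
    rcases hoff i j hij with h | h <;> omega
  have hfund : ∀ {v}, InFund s t v ↔ ∃ r : ℤ, 0 < r ∧ v = r • deltaV d :=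
    inFund_iff_eq_smul_deltaV hform hsymm (fun _ => dotProduct_mulVec_self_pos_of_map_intCast hpos)
      hconn hd (highestRoot_pos hsymm hdiag hoff' hconn hd hdpos hdmax)
  ext β
  constructor
  · refine rClosure_subset ?_ ?_
    · rintro v (hv | hv)
      · obtain ⟨r, hr, rfl⟩ := hfund.1 hv
        exact ⟨r, hr.ne', rfl⟩
      · obtain ⟨r, hr, hv⟩ := hfund.1 hv
        exact ⟨-r, by omega, by rw [neg_smul, ← hv, neg_neg]⟩
    · rintro i _ ⟨r, hr, rfl⟩
      refine ⟨r, hr, reflect_eq_self hform ?_ i⟩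
      rw [smul_vecMul, deltaV_vecMul_extC hd, smul_zero]
  · rintro ⟨r, hr, rfl⟩
    rcases hr.lt_or_gt with hneg | hpos
    · exact .base _ (.inr (hfund.2 ⟨-r, by omega, by rw [neg_smul]⟩))
    · exact .base _ (.inl (hfund.2 ⟨r, hpos, rfl⟩))

end QV
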